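/- Let s ∈ (0, 1] and let a₁, …, a_n be i.i.d. real random variables, each equal to 0 with probability 1−s and distributed as N(0, 1/s) with probability s. Let λ₀ > 0 and let y ∈ ℝ^n satisfy ‖y‖₂ = 1 and ‖y‖_∞ ≤ λ₀, and set Y = Σ_{j=1}^n a_j·y_j. Then for every t with 0 ≤ t ≤ √(2s)/λ₀, one has E[e^{t·Y}] ≤ e^{t²}. -/

import Mathlib

/-!
The coordinates of `a` are independent, so the moment generating function of `Y` factorises
into the moment generating functions `1 - s + s·exp (c² / (2s))` of the sparse Gaussian law at
`c = t·y_j`. As `c² ≤ t²λ₀² ≤ 2s`, the exponent `u = c² / (2s)` lies in `[0, 1]`, where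
`eᵘ ≤ 1 + 2u`; so each factor is at most `1 + c² ≤ exp c²`, and the product is at most
`exp (t²‖y‖₂²) = exp t²`.
-/

open MeasureTheory ProbabilityTheory Real
open scoped NNReal ENNReal

noncomputable section

/-- Matrix–vector product for matrices represented as functions. -/
def matVec {a b : ℕ} (M : Fin a → Fin b → ℝ) (x : Fin b → ℝ) : Fin a → ℝ :=
  fun i => ∑ j, M i j * x j

/-- Matrix–matrix product for matrices represented as functions. -/
def matMul {a b c : ℕ} (M : Fin a → Fin b → ℝ) (N : Fin b → Fin c → ℝ) :
    Fin a → Fin c → ℝ :=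
  fun i k => ∑ j, M i j * N j k

/-- Powers of a square matrix represented as a function. -/
def matPow {a : ℕ} (M : Fin a → Fin a → ℝ) : ℕ → (Fin a → Fin a → ℝ)
  | 0 => fun i j => if i = j then 1 else 0
  | k + 1 => matMul (matPow M k) M

/-- The ℓ¹ norm on ℝ^k. -/
def l1Norm {k : ℕ} (x : Fin k → ℝ) : ℝ := ∑ i, |x i|

/-- The ℓ² norm on ℝ^k. -/
def l2Norm {k : ℕ} (x : Fin k → ℝ) : ℝ := Real.sqrt (∑ i, (x i) ^ 2)

/-- The ℓ^∞ norm on ℝ^k. -/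
def lInfNorm {k : ℕ} (x : Fin k → ℝ) : ℝ := ⨆ i, |x i|

/-- The (∞,1) operator norm: `max_{x ≠ 0} ‖Kx‖₁ / ‖x‖_∞`. -/
def opNormInfOne {a b : ℕ} (K : Fin a → Fin b → ℝ) : ℝ :=
  sSup {t : ℝ | ∃ x : Fin b → ℝ, x ≠ 0 ∧ t = l1Norm (matVec K x) / lInfNorm x}

/-- The (∞,∞) operator norm: `max_{x ≠ 0} ‖Kx‖_∞ / ‖x‖_∞`. -/
def opNormInfInf {a b : ℕ} (K : Fin a → Fin b → ℝ) : ℝ :=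
  sSup {t : ℝ | ∃ x : Fin b → ℝ, x ≠ 0 ∧ t = lInfNorm (matVec K x) / lInfNorm x}

/-- The law `(1-s)·δ₀ + s·N(0,1/s)` of a single entry of a sparse Gaussian random matrix. -/
def sparseGaussianLaw (s : ℝ) : Measure ℝ :=
  (Real.toNNReal (1 - s)) • Measure.dirac (0 : ℝ) +
    (Real.toNNReal s) • gaussianReal 0 (Real.toNNReal s)⁻¹

/-- The law of a sparse Gaussian random matrix with i.i.d. entries of law
`(1-s)·δ₀ + s·N(0,1/s)`. -/
def sparseGaussianMatrixLaw (m n : ℕ) (s : ℝ) : Measure (Fin m → Fin n → ℝ) :=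
  Measure.pi fun _ : Fin m => Measure.pi fun _ : Fin n => sparseGaussianLaw s

/-- The uniform law on `{-1, 1}`. -/
def signLaw : Measure ℝ :=
  ((2 : ℝ≥0)⁻¹) • Measure.dirac (1 : ℝ) + ((2 : ℝ≥0)⁻¹) • Measure.dirac (-1 : ℝ)

/-- The law of a vector of i.i.d. uniform ±1 signs. -/
def signVecLaw (n : ℕ) : Measure (Fin n → ℝ) := Measure.pi fun _ : Fin n => signLaw

/-- Bitwise dot product of the binary representations of two natural numbers. -/
def bitDot (i j : ℕ) : ℕ :=
  ∑ k ∈ Finset.range i.size, if i.testBit k && j.testBit k then 1 else 0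

/-- The normalized Walsh–Hadamard matrix `H_{ij} = n^{-1/2} (-1)^{⟨i,j⟩}` (0-indexed). -/
def walshHadamard (n : ℕ) : Fin n → Fin n → ℝ :=
  fun i j => (Real.sqrt n)⁻¹ * (-1 : ℝ) ^ bitDot (i : ℕ) (j : ℕ)

/-- The fast Johnson–Lindenstrauss transform `Φ = A·H·D` where `D = diag d`. -/
def fjlt {m n : ℕ} (A : Fin m → Fin n → ℝ) (d : Fin n → ℝ) : Fin m → Fin n → ℝ :=
  matMul A (matMul (walshHadamard n) (fun i j => if i = j then d i else 0))

/-- The coefficient of `z^j` in `(1 + z + ⋯ + z^{lt-1})^r`. -/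
def condCoeff (r lt : ℕ) (j : ℕ) : ℝ :=
  ((∑ i ∈ Finset.range lt, (Polynomial.X : Polynomial ℝ) ^ i) ^ r).coeff j

/-- The condensation vector `v ∈ ℝ^λ` of order `r`. -/
def condVec (r lt lam : ℕ) : Fin lam → ℝ := fun j => condCoeff r lt (j : ℕ)

/-- The block matrix `I_p ⊗ v ∈ ℝ^{p × (λp)}` built from a row vector `v ∈ ℝ^λ`. -/
def kronRow {lam p : ℕ} (v : Fin lam → ℝ) (i : Fin p) (c : Fin (lam * p)) : ℝ :=
  if (c : ℕ) / lam = (i : ℕ) then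
    v ⟨(c : ℕ) % lam, Nat.mod_lt _ (Nat.pos_of_ne_zero fun h => absurd c.isLt (by simp [h]))⟩
  else 0

/-- The condensation operator `V = I_p ⊗ v`. -/
def condOp (r lt lam p : ℕ) : Fin p → Fin (lam * p) → ℝ :=
  kronRow (condVec r lt lam)

/-- The normalized condensation operator `Ṽ = (√(π/2)/(p‖v‖₂)) V`. -/
def normCondOp (r lt lam p : ℕ) : Fin p → Fin (lam * p) → ℝ :=
  fun i c => (Real.sqrt (Real.pi / 2) / ((p : ℝ) * l2Norm (condVec r lt lam))) *
    condOp r lt lam p i c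

/-- The first-order difference matrix `P`. -/
def diffMat (m : ℕ) : Fin m → Fin m → ℝ :=
  fun i j => if (i : ℕ) = (j : ℕ) then 1 else if (i : ℕ) = (j : ℕ) + 1 then -1 else 0

/-- Pairing `(i, k) ↦ i·λ + k` as an index into `Fin (λ·p)`. -/
def finPair {p lam : ℕ} (i : Fin p) (k : Fin lam) : Fin (lam * p) :=
  ⟨(i : ℕ) * lam + (k : ℕ), by
    calc (i : ℕ) * lam + (k : ℕ) < (i : ℕ) * lam + lam := Nat.add_lt_add_left k.isLt _
      _ = ((i : ℕ) + 1) * lam := by ring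
      _ ≤ p * lam := Nat.mul_le_mul_right lam i.isLt
      _ = lam * p := Nat.mul_comm p lam⟩

/-- The Kronecker product `v^T ⊗ y ∈ ℝ^{λn}`, whose `(k·n + j)`-th entry is `v_k · y_j`. -/
def kronVec {lam n : ℕ} (v : Fin lam → ℝ) (y : Fin n → ℝ) : Fin (lam * n) → ℝ :=
  fun c =>
    have hn : 0 < n := Nat.pos_of_ne_zero fun h => absurd c.isLt (by simp [h])
    v ⟨(c : ℕ) / n, (Nat.div_lt_iff_lt_mul hn).mpr c.isLt⟩ * y ⟨(c : ℕ) % n, Nat.mod_lt _ hn⟩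

/-- Reshaping of an `(λp) × n` matrix into a `p × (λn)` matrix, with
`B_{i, k·n + j} = A_{i·λ + k, j}`. -/
def reshapeMat {lam p n : ℕ} (A : Fin (lam * p) → Fin n → ℝ) :
    Fin p → Fin (lam * n) → ℝ :=
  fun i c =>
    have hn : 0 < n := Nat.pos_of_ne_zero fun h => absurd c.isLt (by simp [h])
    A (finPair i ⟨(c : ℕ) / n, (Nat.div_lt_iff_lt_mul hn).mpr c.isLt⟩)
      ⟨(c : ℕ) % n, Nat.mod_lt _ hn⟩

/-- The support `n_j = σ·j² + 1` (zero-indexed `j`, i.e. `σ(j-1)²+1` one-indexed). -/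
def sigmaDeltaIdx (σ : ℕ) {r : ℕ} (j : Fin r) : ℕ := σ * (j : ℕ) ^ 2 + 1

/-- The filter coefficient `d_j = ∏_{i ≠ j} n_i / (n_i - n_j)`. -/
def sigmaDeltaCoef (σ : ℕ) {r : ℕ} (j : Fin r) : ℝ :=
  ∏ i ∈ Finset.univ.erase j,
    (sigmaDeltaIdx σ i : ℝ) / ((sigmaDeltaIdx σ i : ℝ) - (sigmaDeltaIdx σ j : ℝ))

end

theorem isProbabilityMeasure_sparseGaussianLaw {s : ℝ} (hs0 : 0 ≤ s) (hs1 : s ≤ 1) :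
    IsProbabilityMeasure (sparseGaussianLaw s) := by
  constructor
  simp only [sparseGaussianLaw, Measure.coe_add, Measure.coe_smul, Pi.add_apply,
    Pi.smul_apply, measure_univ, ENNReal.smul_def, smul_eq_mul, mul_one]
  rw [← ENNReal.coe_add, ← Real.toNNReal_add (by linarith) hs0]
  simp

theorem integral_exp_mul_sparseGaussianLaw {s : ℝ} (hs0 : 0 < s) (hs1 : s ≤ 1) (c : ℝ) :
    ∫ x, rexp (c * x) ∂sparseGaussianLaw s = 1 - s + s * rexp (c ^ 2 / (2 * s)) := by
  have hdirac : Integrable (fun x => rexp (c * x)) (Measure.dirac 0) :=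
    integrable_dirac (by simp)
  have hgauss : ∫ x, rexp (c * x) ∂gaussianReal 0 (Real.toNNReal s)⁻¹
      = rexp (c ^ 2 / (2 * s)) := by
    have := congrFun (mgf_id_gaussianReal (μ := 0) (v := (Real.toNNReal s)⁻¹)) c
    simp only [mgf, id] at this
    rw [this, NNReal.coe_inv, Real.coe_toNNReal _ hs0.le]
    congr 1
    ring
  rw [sparseGaussianLaw, integral_add_measure hdirac.smul_measure_nnreal
      (integrable_exp_mul_gaussianReal c).smul_measure_nnreal,
    integral_smul_nnreal_measure, integral_smul_nnreal_measure, integral_dirac, hgauss]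
  simp [NNReal.smul_def, Real.coe_toNNReal _ hs0.le, Real.coe_toNNReal _ (sub_nonneg.2 hs1)]

theorem one_sub_add_mul_exp_div_le_exp {s x : ℝ} (hs : 0 < s) (hx0 : 0 ≤ x) (hx : x ≤ 2 * s) :
    1 - s + s * rexp (x / (2 * s)) ≤ rexp x := by
  have hu0 : 0 ≤ x / (2 * s) := by positivity
  have hu1 : |x / (2 * s)| ≤ 1 := by
    rw [abs_of_nonneg hu0]
    exact (div_le_one (by positivity)).2 hx
  have hexp : rexp (x / (2 * s)) - 1 ≤ 2 * (x / (2 * s)) := by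
    simpa [abs_of_nonneg hu0] using (le_abs_self _).trans (Real.abs_exp_sub_one_le hu1)
  calc 1 - s + s * rexp (x / (2 * s)) ≤ 1 - s + s * (1 + 2 * (x / (2 * s))) := by
        gcongr; linarith
    _ = x + 1 := by field_simp; ring
    _ ≤ rexp x := Real.add_one_le_exp x

theorem integral_exp_sum_mul_pi {ι : Type*} [Fintype ι] (μ : ι → Measure ℝ)
    [∀ i, SigmaFinite (μ i)] (c : ι → ℝ) :
    ∫ x, rexp (∑ i, c i * x i) ∂Measure.pi μ = ∏ i, ∫ x, rexp (c i * x) ∂μ i := by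
  simp_rw [Real.exp_sum]
  exact integral_fintype_prod_eq_prod fun i x => rexp (c i * x)

theorem abs_le_lInfNorm {k : ℕ} (x : Fin k → ℝ) (i : Fin k) : |x i| ≤ lInfNorm x :=
  le_ciSup (f := fun i => |x i|) (Set.finite_range _).bddAbove i

theorem mul_abs_le_of_le_div {t b c d : ℝ} (ht : 0 ≤ t) (hc : 0 ≤ c) (h : t ≤ c / b)
    (hd : |d| ≤ b) : t * |d| ≤ c := by
  rcases (abs_nonneg d).eq_or_lt with hd0 | hd0
  · rwa [← hd0, mul_zero]
  · calc t * |d| ≤ t * b := by gcongr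
      _ ≤ c := (le_div_iff₀ (hd0.trans_le hd)).1 h

theorem sparse_gaussian_mgf_bound_general (n : ℕ) (s : ℝ) (hs0 : 0 < s) (hs1 : s ≤ 1)
    (lam₀ : ℝ) (y : Fin n → ℝ) (hy2 : l2Norm y = 1)
    (hyinf : lInfNorm y ≤ lam₀)
    (Ω : Type) [MeasurableSpace Ω] (P : Measure Ω)
    (a : Ω → Fin n → ℝ) (ha : Measurable a)
    (hlaw : P.map a = Measure.pi fun _ : Fin n => sparseGaussianLaw s) :
    ∀ t : ℝ, 0 ≤ t → t ≤ Real.sqrt (2 * s) / lam₀ →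
      ∫ ω, Real.exp (t * ∑ j, a ω j * y j) ∂P ≤ Real.exp (t ^ 2) := by
  intro t ht htle
  have hsum : ∑ j, y j ^ 2 = 1 := Real.sqrt_eq_one.mp hy2
  have hty : ∀ j, (t * y j) ^ 2 ≤ 2 * s := fun j => by
    rw [← sq_abs, abs_mul, abs_of_nonneg ht, ← Real.le_sqrt (by positivity) (by linarith)]
    exact mul_abs_le_of_le_div ht (Real.sqrt_nonneg _) htle
      ((abs_le_lInfNorm y j).trans hyinf)
  calc ∫ ω, rexp (t * ∑ j, a ω j * y j) ∂P
      = ∫ x, rexp (∑ j, t * y j * x j) ∂P.map a := by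
        rw [integral_map ha.aemeasurable (by fun_prop : Measurable fun x : Fin n → ℝ =>
          rexp (∑ j, t * y j * x j)).aestronglyMeasurable]
        congr 1 with ω
        rw [Finset.mul_sum]
        exact congrArg rexp (Finset.sum_congr rfl fun j _ => by ring)
    _ = ∏ j, (1 - s + s * rexp ((t * y j) ^ 2 / (2 * s))) := by
        have := isProbabilityMeasure_sparseGaussianLaw hs0.le hs1
        rw [hlaw, integral_exp_sum_mul_pi]
        simp_rw [integral_exp_mul_sparseGaussianLaw hs0 hs1]
    _ ≤ ∏ j, rexp ((t * y j) ^ 2) :=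
        Finset.prod_le_prod (fun _ _ => add_nonneg (sub_nonneg.2 hs1) (by positivity))
          fun j _ => one_sub_add_mul_exp_div_le_exp hs0 (sq_nonneg _) (hty j)
    _ = rexp (t ^ 2) := by
        rw [← Real.exp_sum]
        simp_rw [mul_pow, ← Finset.mul_sum, hsum, mul_one]

/-- Moment generating function bound for a sparse Gaussian linear form. -/
theorem sparse_gaussian_mgf_bound (n : ℕ) (s : ℝ) (hs0 : 0 < s) (hs1 : s ≤ 1)
    (lam₀ : ℝ) (hlam₀ : 0 < lam₀) (y : Fin n → ℝ) (hy2 : l2Norm y = 1)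
    (hyinf : lInfNorm y ≤ lam₀)
    (Ω : Type) [MeasurableSpace Ω] (P : Measure Ω) [IsProbabilityMeasure P]
    (a : Ω → Fin n → ℝ) (ha : Measurable a)
    (hlaw : P.map a = Measure.pi fun _ : Fin n => sparseGaussianLaw s) :
    ∀ t : ℝ, 0 ≤ t → t ≤ Real.sqrt (2 * s) / lam₀ →
      ∫ ω, Real.exp (t * ∑ j, a ω j * y j) ∂P ≤ Real.exp (t ^ 2) :=
  sparse_gaussian_mgf_bound_general n s hs0 hs1 lam₀ y hy2 hyinf Ω P a ha hlaw
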